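/- If (b_1,…,b_r) is a sequence of integers with every b_i ≥ 2 whose Hirzebruch–Jung continued fraction equals d·n²/(d·n·a − 1) for integers d ≥ 1 and coprime n > a ≥ 1, then the reversed sequence (b_r,…,b_1) has Hirzebruch–Jung continued fraction equal to d·n²/(d·n·(n−a) − 1), with n > n − a ≥ 1 and gcd(n, n−a) = 1. In particular, the reverse of a T-chain datum is a T-chain datum with the same d and n. -/

import Mathlib

/-- Hirzebruch–Jung continued fraction of a list of integers:
`hj [b₁,…,b_r] = b₁ - 1/(b₂ - 1/(⋯ - 1/b_r))`.
(Since `1/0 = 0` in `ℚ`, `hj [b] = b`.) -/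
def hj : List ℤ → ℚ
  | [] => 0
  | b :: l => (b : ℚ) - 1 / hj l

/-- A nonempty sequence of integers, each `≥ 2`, is a T-chain datum if its
Hirzebruch–Jung continued fraction equals `d·n²/(d·n·a − 1)` for some integers
`d ≥ 1` and coprime `n > a ≥ 1`. -/
def IsTChainDatum (l : List ℤ) : Prop :=
  l ≠ [] ∧ (∀ b ∈ l, 2 ≤ b) ∧
    ∃ d n a : ℤ, 1 ≤ d ∧ 1 ≤ a ∧ a < n ∧ Int.gcd n a = 1 ∧
      hj l = (d * n ^ 2 : ℚ) / (d * n * a - 1)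

/-! Write `M(b₁,…,b_r)` for the product of the matrices `[[bᵢ, -1], [1, 0]]`. Its first column
`(p, q)` gives `[b₁,…,b_r] = p/q` in lowest terms, with `0 ≤ q < p` when all `bᵢ ≥ 2`, and
`det M = 1`. Since `[[b, -1], [1, 0]]ᵀ` is the conjugate of `[[b, -1], [1, 0]]` by `diag(1, -1)`,
`M(b_r,…,b_1) = (diag(1,-1) · M · diag(1,-1))ᵀ`, whose first column is `(p, q')` with
`q q' ≡ 1 (mod p)` by the determinant. So the reversed fraction is `p/q'` with `q'` the inverse of
`q` modulo `p` in `[0, p)`; for `p = d n²`, `q = d n a - 1` this inverse is `d n (n - a) - 1`. -/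

open Matrix

def hjStep (b : ℤ) : Matrix (Fin 2) (Fin 2) ℤ := !![b, -1; 1, 0]

def hjMatrix (l : List ℤ) : Matrix (Fin 2) (Fin 2) ℤ := (l.map hjStep).prod

def signFlip : Matrix (Fin 2) (Fin 2) ℤ := !![1, 0; 0, -1]

lemma hjMatrix_cons (b : ℤ) (l : List ℤ) : hjMatrix (b :: l) = hjStep b * hjMatrix l := rfl

lemma det_hjMatrix (l : List ℤ) : (hjMatrix l).det = 1 := by
  rw [hjMatrix, ← coe_detMonoidHom, map_list_prod, List.map_map]
  refine List.prod_eq_one fun x hx => ?_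
  obtain ⟨b, -, rfl⟩ := List.mem_map.mp hx
  simp [hjStep, det_fin_two]

lemma signFlip_mul_self : signFlip * signFlip = 1 := by
  ext i j; fin_cases i <;> fin_cases j <;> simp [signFlip]

lemma transpose_signFlip_conj_hjStep (b : ℤ) : (signFlip * hjStep b * signFlip)ᵀ = hjStep b := by
  ext i j; fin_cases i <;> fin_cases j <;> simp [signFlip, hjStep]

lemma list_prod_map_conj_signFlip (l : List ℤ) :
    (l.map fun b => signFlip * hjStep b * signFlip).prod = signFlip * hjMatrix l * signFlip := by
  induction l with
  | nil => simp [hjMatrix, signFlip_mul_self]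
  | cons b l ih =>
    rw [List.map_cons, List.prod_cons, ih, hjMatrix_cons]
    simp only [mul_assoc, ← mul_assoc signFlip signFlip, signFlip_mul_self, one_mul]

lemma hjMatrix_reverse (l : List ℤ) : hjMatrix l.reverse = (signFlip * hjMatrix l * signFlip)ᵀ := by
  rw [← list_prod_map_conj_signFlip, transpose_list_prod, List.map_map, hjMatrix,
    List.map_reverse]
  simp only [Function.comp_def, transpose_signFlip_conj_hjStep]

lemma hjMatrix_reverse_apply_zero_zero (l : List ℤ) : hjMatrix l.reverse 0 0 = hjMatrix l 0 0 := by
  simp [hjMatrix_reverse, signFlip, mul_apply, vecMul, dotProduct, Fin.sum_univ_two]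

lemma hjMatrix_reverse_apply_one_zero (l : List ℤ) : hjMatrix l.reverse 1 0 = -hjMatrix l 0 1 := by
  simp [hjMatrix_reverse, signFlip, mul_apply, vecMul, dotProduct, Fin.sum_univ_two]

lemma hjMatrix_cons_apply_zero_zero (b : ℤ) (l : List ℤ) :
    hjMatrix (b :: l) 0 0 = b * hjMatrix l 0 0 - hjMatrix l 1 0 := by
  simp [hjMatrix_cons, hjStep, mul_apply, Fin.sum_univ_two, sub_eq_add_neg]

lemma hjMatrix_cons_apply_one_zero (b : ℤ) (l : List ℤ) :
    hjMatrix (b :: l) 1 0 = hjMatrix l 0 0 := by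
  simp [hjMatrix_cons, hjStep, mul_apply, Fin.sum_univ_two]

lemma isCoprime_hjMatrix_apply (l : List ℤ) : IsCoprime (hjMatrix l 0 0) (hjMatrix l 1 0) := by
  have h := det_hjMatrix l
  rw [det_fin_two] at h
  exact ⟨hjMatrix l 1 1, -hjMatrix l 0 1, by linear_combination h⟩

lemma hjMatrix_apply_one_zero_nonneg_and_lt {l : List ℤ} (h2 : ∀ b ∈ l, 2 ≤ b) :
    0 ≤ hjMatrix l 1 0 ∧ hjMatrix l 1 0 < hjMatrix l 0 0 := by
  induction l with
  | nil => simp [hjMatrix]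
  | cons b l ih =>
    obtain ⟨hq, hqp⟩ := ih fun x hx => h2 x (List.mem_cons_of_mem _ hx)
    have hb := h2 b List.mem_cons_self
    rw [hjMatrix_cons_apply_zero_zero, hjMatrix_cons_apply_one_zero]
    constructor <;> nlinarith

lemma hj_eq_div_hjMatrix {l : List ℤ} (h2 : ∀ b ∈ l, 2 ≤ b) :
    hj l = (hjMatrix l 0 0 : ℚ) / hjMatrix l 1 0 := by
  induction l with
  | nil => simp [hj, hjMatrix]
  | cons b l ih =>
    have h2' : ∀ x ∈ l, 2 ≤ x := fun x hx => h2 x (List.mem_cons_of_mem _ hx)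
    have hp : (hjMatrix l 0 0 : ℚ) ≠ 0 := by
      have := hjMatrix_apply_one_zero_nonneg_and_lt h2'
      exact_mod_cast (this.1.trans_lt this.2).ne'
    rw [hj, ih h2', hjMatrix_cons_apply_zero_zero, hjMatrix_cons_apply_one_zero]
    push_cast
    field_simp

lemma Int.eq_of_mul_modEq_mul {p q x y : ℤ} (hpq : IsCoprime p q) (h : q * x ≡ q * y [ZMOD p])
    (hx : 0 ≤ x) (hxp : x < p) (hy : 0 ≤ y) (hyp : y < p) : x = y := by
  have hxy := Int.ModEq.cancel_left_div_gcd (hx.trans_lt hxp) h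
  rw [Int.isCoprime_iff_gcd_eq_one.mp hpq, Int.ofNat_one, Int.ediv_one] at hxy
  rwa [Int.ModEq, Int.emod_eq_of_lt hx hxp, Int.emod_eq_of_lt hy hyp] at hxy

theorem hj_reverse_eq_div_of_hj_eq_div {l : List ℤ} (h2 : ∀ b ∈ l, 2 ≤ b) {p q q' : ℤ}
    (hq : 0 < q) (hpq : IsCoprime p q) (hhj : hj l = (p : ℚ) / q)
    (hq' : 0 ≤ q') (hq'p : q' < p) (hinv : q * q' ≡ 1 [ZMOD p]) :
    hj l.reverse = (p : ℚ) / q' := by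
  obtain ⟨hM10, hM10M00⟩ := hjMatrix_apply_one_zero_nonneg_and_lt h2
  have hM10_pos : 0 < hjMatrix l 1 0 := by
    refine hM10.lt_of_ne fun h => ?_
    have : (0 : ℚ) < p / q := by
      have : (0 : ℚ) < p := by exact_mod_cast hq'.trans_lt hq'p
      positivity
    rw [← hhj, hj_eq_div_hjMatrix h2, ← h] at this
    simp at this
  obtain ⟨rfl, rfl⟩ := Rat.div_int_inj hM10_pos hq (Int.isCoprime_iff_gcd_eq_one.mp
    (isCoprime_hjMatrix_apply l)) (Int.isCoprime_iff_gcd_eq_one.mp hpq)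
    ((hj_eq_div_hjMatrix h2).symm.trans hhj)
  obtain ⟨hr, hr_lt⟩ := hjMatrix_apply_one_zero_nonneg_and_lt
    (fun b hb => h2 b (List.mem_reverse.mp hb))
  simp only [hjMatrix_reverse_apply_one_zero, hjMatrix_reverse_apply_zero_zero] at hr hr_lt
  have hdet : hjMatrix l 1 0 * -hjMatrix l 0 1 ≡ 1 [ZMOD hjMatrix l 0 0] := by
    have h := det_hjMatrix l
    rw [det_fin_two] at h
    exact Int.modEq_iff_dvd.mpr ⟨hjMatrix l 1 1, by linear_combination -h⟩
  have hr_eq := Int.eq_of_mul_modEq_mul hpq (hdet.trans hinv.symm) hr hr_lt hq' hq'p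
  rw [hj_eq_div_hjMatrix fun b hb => h2 b (List.mem_reverse.mp hb),
    hjMatrix_reverse_apply_zero_zero, hjMatrix_reverse_apply_one_zero, hr_eq]

/-- If `(b₁,…,b_r)` has all entries `≥ 2` and HJ continued fraction
`d·n²/(d·n·a − 1)` with `d ≥ 1`, coprime `n > a ≥ 1`, then the reversed
sequence has HJ continued fraction `d·n²/(d·n·(n−a) − 1)`, with
`n > n − a ≥ 1` and `gcd(n, n−a) = 1`.  In particular the reverse of a
T-chain datum is a T-chain datum with the same `d` and `n`. -/
theorem stmt5 (l : List ℤ) (hne : l ≠ []) (h2 : ∀ b ∈ l, 2 ≤ b)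
    (d n a : ℤ) (hd : 1 ≤ d) (ha : 1 ≤ a) (han : a < n) (hcop : Int.gcd n a = 1)
    (hhj : hj l = (d * n ^ 2 : ℚ) / (d * n * a - 1)) :
    1 ≤ n - a ∧ n - a < n ∧ Int.gcd n (n - a) = 1 ∧
    hj l.reverse = (d * n ^ 2 : ℚ) / (d * n * (n - a) - 1) ∧
    IsTChainDatum l.reverse := by
  have hgcd : Int.gcd n (n - a) = 1 := by rwa [Int.gcd_self_sub_right]
  have hdn : 0 < d * n := mul_pos (by omega) (by omega)
  have hrev : hj l.reverse = ((d * n ^ 2 : ℤ) : ℚ) / (d * n * (n - a) - 1 : ℤ) := by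
    -- `(d n a - 1) (d n (n - a) - 1) = d n² (d a (n - a) - 1) + 1`
    exact hj_reverse_eq_div_of_hj_eq_div h2 (q := d * n * a - 1) (by nlinarith)
      ⟨d * a ^ 2, -(d * n * a + 1), by ring⟩ (by push_cast; exact hhj) (by nlinarith)
      (by nlinarith) (Int.modEq_iff_dvd.mpr ⟨1 - d * a * (n - a), by ring⟩)
  push_cast at hrev
  exact ⟨by omega, by omega, hgcd, hrev, by simpa using hne,
    fun b hb => h2 b (List.mem_reverse.mp hb), d, n, n - a, hd, by omega, by omega, hgcd,
    by push_cast; exact hrev⟩
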